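/- arXiv:1607.05978 — 8 statements merged into one kernel-verified Lean document; each statement's English description precedes it below -/
import Mathlib

section
/- Let H be a real Hilbert space, let ι be a nonempty index set, and let a : ι → (0,∞). For u ∈ H define I(u) := inf { ∑_{j∈F} a_j ‖u_j‖² : F ⊆ ι finite, u_j ∈ H for j ∈ F, and ∑_{j∈F} u_j = u }. If the family (a_j⁻¹)_{j∈ι} is summable, then I(u) = (∑_{j∈ι} a_j⁻¹)⁻¹ ‖u‖² for every u ∈ H. If (a_j⁻¹)_{j∈ι} is not summable, then I(u) = 0 for every u ∈ H. -/
section aux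

variable {H : Type*} [NormedAddCommGroup H] [InnerProductSpace ℝ H]
variable {ι : Type*} (a : ι → ℝ)

/-- The admissible-decomposition energy set. -/
private def stmt0Set (u : H) : Set ℝ :=
  {r : ℝ | ∃ (F : Finset ι) (v : ι → H),
      (∑ j ∈ F, v j) = u ∧ r = ∑ j ∈ F, a j * ‖v j‖ ^ 2}

private lemma stmt0_nonneg {a : ι → ℝ} (ha : ∀ j, 0 < a j) {u : H} {r : ℝ}
    (hr : r ∈ stmt0Set a u) : 0 ≤ r := by
  obtain ⟨F, v, -, rfl⟩ := hr
  exact Finset.sum_nonneg fun j _ => mul_nonneg (ha j).le (by positivity)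

private lemma stmt0_bddBelow {a : ι → ℝ} (ha : ∀ j, 0 < a j) (u : H) :
    BddBelow (stmt0Set a u) :=
  ⟨0, fun r hr => stmt0_nonneg ha hr⟩

private lemma stmt0_mem (u : H) {F : Finset ι} {a : ι → ℝ} (ha : ∀ j, 0 < a j)
    (hF : F.Nonempty) :
    (∑ j ∈ F, (a j)⁻¹)⁻¹ * ‖u‖ ^ 2 ∈ stmt0Set a u := by
  set A : ℝ := ∑ j ∈ F, (a j)⁻¹ with hA
  have hApos : 0 < A := Finset.sum_pos (fun j _ => inv_pos.2 (ha j)) hF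
  refine ⟨F, fun j => (A⁻¹ * (a j)⁻¹) • u, ?_, ?_⟩
  · rw [← Finset.sum_smul, ← Finset.mul_sum, ← hA, inv_mul_cancel₀ hApos.ne', one_smul]
  · have hc : ∀ j ∈ F, a j * ‖(fun j => (A⁻¹ * (a j)⁻¹) • u) j‖ ^ 2
        = A⁻¹ * A⁻¹ * ((a j)⁻¹ * ‖u‖ ^ 2) := by
      intro j hj
      have h1 : (0:ℝ) ≤ A⁻¹ * (a j)⁻¹ :=
        mul_nonneg (inv_nonneg.2 hApos.le) (inv_pos.2 (ha j)).le
      simp only [norm_smul, Real.norm_eq_abs, abs_of_nonneg h1]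
      have := (ha j).ne'
      field_simp
    rw [Finset.sum_congr rfl hc, ← Finset.mul_sum, ← Finset.sum_mul, ← hA]
    field_simp

private lemma stmt0_lower {a : ι → ℝ} (ha : ∀ j, 0 < a j) {u : H} {F : Finset ι}
    {v : ι → H} (hsum : (∑ j ∈ F, v j) = u) :
    (∑ j ∈ F, (a j)⁻¹)⁻¹ * ‖u‖ ^ 2 ≤ ∑ j ∈ F, a j * ‖v j‖ ^ 2 := by
  rcases F.eq_empty_or_nonempty with rfl | hF
  · simp only [Finset.sum_empty] at hsum ⊢
    simp [← hsum]
  set A : ℝ := ∑ j ∈ F, (a j)⁻¹ with hA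
  have hApos : 0 < A := Finset.sum_pos (fun j _ => inv_pos.2 (ha j)) hF
  rw [inv_mul_le_iff₀ hApos]
  calc ‖u‖ ^ 2 = ‖∑ j ∈ F, v j‖ ^ 2 := by rw [hsum]
    _ ≤ (∑ j ∈ F, ‖v j‖) ^ 2 :=
        pow_le_pow_left₀ (norm_nonneg _) (norm_sum_le _ _) 2
    _ = (∑ j ∈ F, Real.sqrt ((a j)⁻¹) * (Real.sqrt (a j) * ‖v j‖)) ^ 2 := by
        congr 1
        refine Finset.sum_congr rfl fun j _ => ?_
        rw [← mul_assoc, ← Real.sqrt_mul (inv_pos.2 (ha j)).le, inv_mul_cancel₀ (ha j).ne',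
          Real.sqrt_one, one_mul]
    _ ≤ (∑ j ∈ F, Real.sqrt ((a j)⁻¹) ^ 2) * ∑ j ∈ F, (Real.sqrt (a j) * ‖v j‖) ^ 2 :=
        Finset.sum_mul_sq_le_sq_mul_sq F _ _
    _ = A * ∑ j ∈ F, a j * ‖v j‖ ^ 2 := by
        congr 1
        · exact Finset.sum_congr rfl fun j _ => Real.sq_sqrt (inv_pos.2 (ha j)).le
        · refine Finset.sum_congr rfl fun j _ => ?_
          rw [mul_pow, Real.sq_sqrt (ha j).le]

end aux

/-- Lemma 3.1 of [GHO], as cited in the paper.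
For a real Hilbert space `H`, a nonempty index set `ι` and positive weights `a : ι → ℝ`,
define for `u ∈ H` the quantity
`I(u) = inf { ∑_{j∈F} a j * ‖v j‖² : F ⊆ ι finite, ∑_{j∈F} v j = u }`.
If `(a j⁻¹)` is summable then `I(u) = (∑' j, (a j)⁻¹)⁻¹ * ‖u‖²` for all `u`;
otherwise `I(u) = 0` for all `u`. -/
theorem stmt0 {H : Type*} [NormedAddCommGroup H] [InnerProductSpace ℝ H] [CompleteSpace H]
    {ι : Type*} [Nonempty ι] (a : ι → ℝ) (ha : ∀ j, 0 < a j) :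
    (Summable (fun j => (a j)⁻¹) →
      ∀ u : H,
        sInf {r : ℝ | ∃ (F : Finset ι) (v : ι → H),
            (∑ j ∈ F, v j) = u ∧ r = ∑ j ∈ F, a j * ‖v j‖ ^ 2}
          = (∑' j, (a j)⁻¹)⁻¹ * ‖u‖ ^ 2) ∧
    (¬ Summable (fun j => (a j)⁻¹) →
      ∀ u : H,
        sInf {r : ℝ | ∃ (F : Finset ι) (v : ι → H),
            (∑ j ∈ F, v j) = u ∧ r = ∑ j ∈ F, a j * ‖v j‖ ^ 2} = 0) := by
  inhabit ι
  have hzero : ∀ u : H, u = 0 → sInf (stmt0Set a u) = 0 := by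
    rintro u rfl
    refine le_antisymm (csInf_le (stmt0_bddBelow ha 0) ⟨∅, fun _ => 0, by simp, by simp⟩)
      (le_csInf ⟨0, ∅, fun _ => 0, by simp, by simp⟩ fun r hr => stmt0_nonneg ha hr)
  have hne : ∀ u : H, (stmt0Set a u).Nonempty := fun u =>
    ⟨(∑ j ∈ ({default} : Finset ι), (a j)⁻¹)⁻¹ * ‖u‖ ^ 2,
      stmt0_mem u ha (Finset.singleton_nonempty _)⟩
  constructor
  · intro hsummable u
    show sInf (stmt0Set a u) = _
    rcases eq_or_ne u 0 with rfl | hu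
    · simp [hzero 0 rfl]
    set T : ℝ := ∑' j, (a j)⁻¹ with hT
    have hTpos : 0 < T :=
      Summable.tsum_pos hsummable (fun j => (inv_pos.2 (ha j)).le) default (inv_pos.2 (ha default))
    refine le_antisymm ?_ ?_
    · -- sInf ≤ T⁻¹ ‖u‖²
      have htend : Filter.Tendsto (fun F : Finset ι => (∑ j ∈ F, (a j)⁻¹)⁻¹ * ‖u‖ ^ 2)
          Filter.atTop (nhds (T⁻¹ * ‖u‖ ^ 2)) :=
        (hsummable.hasSum.inv₀ hTpos.ne').mul_const _
      refine ge_of_tendsto htend ?_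
      filter_upwards [Filter.eventually_ge_atTop ({default} : Finset ι)] with F hF
      exact csInf_le (stmt0_bddBelow ha u)
        (stmt0_mem u ha ((Finset.singleton_nonempty _).mono hF))
    · refine le_csInf (hne u) ?_
      rintro r ⟨F, v, hvsum, rfl⟩
      have hFne : F.Nonempty := by
        rcases F.eq_empty_or_nonempty with rfl | h
        · simp only [Finset.sum_empty] at hvsum; exact absurd hvsum.symm hu
        · exact h
      have hApos : 0 < ∑ j ∈ F, (a j)⁻¹ :=
        Finset.sum_pos (fun j _ => inv_pos.2 (ha j)) hFne
      have hAT : (∑ j ∈ F, (a j)⁻¹) ≤ T :=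
        Summable.sum_le_tsum F (fun j _ => (inv_pos.2 (ha j)).le) hsummable
      calc T⁻¹ * ‖u‖ ^ 2 ≤ (∑ j ∈ F, (a j)⁻¹)⁻¹ * ‖u‖ ^ 2 :=
            mul_le_mul_of_nonneg_right (inv_anti₀ hApos hAT) (by positivity)
        _ ≤ _ := stmt0_lower ha hvsum
  · intro hnot u
    show sInf (stmt0Set a u) = 0
    rcases eq_or_ne u 0 with rfl | hu
    · exact hzero 0 rfl
    refine le_antisymm ?_ (le_csInf (hne u) fun r hr => stmt0_nonneg ha hr)
    have hlt : ∀ ε : ℝ, 0 < ε → sInf (stmt0Set a u) ≤ ε := by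
      intro ε hε
      obtain ⟨F, hF⟩ : ∃ F : Finset ι, ‖u‖ ^ 2 / ε < ∑ j ∈ F, (a j)⁻¹ := by
        by_contra h
        push_neg at h
        exact hnot (summable_of_sum_le (fun j => (inv_pos.2 (ha j)).le) h)
      have hFpos : 0 < ∑ j ∈ F, (a j)⁻¹ :=
        lt_of_le_of_lt (by positivity) hF
      have hFne : F.Nonempty := by
        rcases F.eq_empty_or_nonempty with rfl | h
        · simp at hFpos
        · exact h
      refine le_trans (csInf_le (stmt0_bddBelow ha u) (stmt0_mem u ha hFne)) ?_
      rw [inv_mul_le_iff₀ hFpos]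
      calc ‖u‖ ^ 2 = ‖u‖ ^ 2 / ε * ε := by field_simp
        _ ≤ (∑ j ∈ F, (a j)⁻¹) * ε := mul_le_mul_of_nonneg_right hF.le hε.le
    by_contra h
    push_neg at h
    exact absurd (hlt _ (by linarith)) (by linarith [hlt (sInf (stmt0Set a u) / 2) (by linarith)])
end

section
/- Let ι be an index set, let (E_j)_{j∈ι} be real inner product spaces each containing a nonzero vector, and let a, b : ι → [0,∞). Then the following are equivalent: (i) for every j with a_j > 0 one has b_j > 0, and there exists a constant C < ∞ such that b_j ≤ C² a_j for all j with a_j > 0; (ii) every family (w_j)_{j∈ι} with w_j ∈ E_j, with w_j = 0 whenever a_j = 0, and with ∑_{j∈ι} a_j ‖w_j‖² < ∞, satisfies w_j = 0 whenever b_j = 0 and ∑_{j∈ι} b_j ‖w_j‖² < ∞. -/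
/-- Proposition 1(a).
For real inner product spaces `E j` (each containing a nonzero vector) and nonnegative weights
`a, b`, the inclusion of the weighted decomposition space `H^∞_{W,a}` into `H^∞_{W,b}`
(statement (ii)) holds if and only if the support of `a` is contained in the support of `b`
and `b ≤ C² a` on the support of `a` for some constant `C < ∞` (statement (i)). -/
theorem stmt2 {ι : Type*} (E : ι → Type*) [∀ j, NormedAddCommGroup (E j)]
    [∀ j, InnerProductSpace ℝ (E j)] (hE : ∀ j, ∃ v : E j, v ≠ 0)
    (a b : ι → ℝ) (ha : ∀ j, 0 ≤ a j) (hb : ∀ j, 0 ≤ b j) :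
    ((∀ j, 0 < a j → 0 < b j) ∧ ∃ C : ℝ, ∀ j, 0 < a j → b j ≤ C ^ 2 * a j) ↔
    (∀ w : (j : ι) → E j, (∀ j, a j = 0 → w j = 0) →
      Summable (fun j => a j * ‖w j‖ ^ 2) →
      ((∀ j, b j = 0 → w j = 0) ∧ Summable (fun j => b j * ‖w j‖ ^ 2))) := by
  classical
  constructor
  · rintro ⟨h1, C, h2⟩ w hw0 hsum
    constructor
    · intro j hbj
      rcases eq_or_lt_of_le (ha j) with h | h
      · exact hw0 j h.symm
      · exact absurd hbj (h1 j h).ne'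
    · refine Summable.of_nonneg_of_le (fun j => mul_nonneg (hb j) (sq_nonneg _)) (fun j => ?_)
        (hsum.mul_left (C ^ 2))
      rcases eq_or_lt_of_le (ha j) with h | h
      · simp [hw0 j h.symm]
      · calc b j * ‖w j‖ ^ 2 ≤ (C ^ 2 * a j) * ‖w j‖ ^ 2 := by
              have := h2 j h
              nlinarith [sq_nonneg (‖w j‖)]
          _ = C ^ 2 * (a j * ‖w j‖ ^ 2) := by ring
  · intro h
    constructor
    · intro i hai
      obtain ⟨v, hv⟩ := hE i
      have hw0 : ∀ k, a k = 0 → Pi.single i v k = 0 := by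
        intro k hak
        rcases eq_or_ne k i with rfl | hk
        · exact absurd hak hai.ne'
        · exact Pi.single_eq_of_ne hk v
      have hsum : Summable (fun k => a k * ‖Pi.single i v k‖ ^ 2) := by
        refine summable_of_ne_finset_zero (s := {i}) (fun k hk => ?_)
        rw [Pi.single_eq_of_ne (by simpa using hk) v]
        simp
      rcases eq_or_lt_of_le (hb i) with hbi | hbi
      · exact absurd (by simpa using (h _ hw0 hsum).1 i hbi.symm) hv
      · exact hbi
    · by_contra hC
      push_neg at hC
      have hC' : ∀ n : ℕ, ∃ i, 0 < a i ∧ ((n : ℝ) + 1) ^ 2 * a i < b i := by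
        intro n
        exact hC ((n : ℝ) + 1)
      choose j hj1 hj2 using hC'
      choose v hv using hE
      set u : ∀ i, E i := fun i => ‖v i‖⁻¹ • v i with hu
      have hnu : ∀ i, ‖u i‖ = 1 := by
        intro i
        rw [hu]
        simp [norm_smul, inv_mul_cancel₀ (norm_ne_zero_iff.2 (hv i))]
      set w : ∀ i, E i := fun i =>
        if h : ∃ n, j n = i then
          (((Nat.find h : ℝ) + 1)⁻¹ * (Real.sqrt (a i))⁻¹) • u i else 0 with hwdef
      -- positivity of a on range j
      have harange : ∀ i (h : ∃ n, j n = i), 0 < a i := by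
        rintro i h
        have := hj1 (Nat.find h)
        rwa [Nat.find_spec h] at this
      have hbrange : ∀ i (h : ∃ n, j n = i),
          ((Nat.find h : ℝ) + 1) ^ 2 * a i < b i := by
        rintro i h
        have := hj2 (Nat.find h)
        rwa [Nat.find_spec h] at this
      have hwnorm : ∀ i (h : ∃ n, j n = i),
          ‖w i‖ ^ 2 = (((Nat.find h : ℝ) + 1) ^ 2)⁻¹ * (a i)⁻¹ := by
        intro i h
        have hai := harange i h
        have hs : (0 : ℝ) < Real.sqrt (a i) := Real.sqrt_pos.2 hai
        have hm : (0 : ℝ) < (Nat.find h : ℝ) + 1 := by positivity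
        rw [hwdef]
        simp only [dif_pos h]
        rw [norm_smul, hnu i, mul_one]
        rw [Real.norm_eq_abs, abs_of_pos (by positivity)]
        rw [mul_pow, inv_pow, inv_pow, Real.sq_sqrt hai.le]
      have hw0 : ∀ i, a i = 0 → w i = 0 := by
        intro i hai
        rw [hwdef]
        by_cases h : ∃ n, j n = i
        · exact absurd hai (harange i h).ne'
        · simp [dif_neg h]
      have haw : ∀ i, a i * ‖w i‖ ^ 2 =
          if h : ∃ n, j n = i then (((Nat.find h : ℝ) + 1) ^ 2)⁻¹ else 0 := by
        intro i
        by_cases h : ∃ n, j n = i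
        · rw [hwnorm i h, dif_pos h]
          have hai := (harange i h).ne'
          field_simp
        · rw [dif_neg h]
          have : w i = 0 := by rw [hwdef]; simp [dif_neg h]
          simp [this]
      -- summability of the a-weighted sums
      have hf : Summable (fun n : ℕ => (((n : ℝ) + 1) ^ 2)⁻¹) := by
        have := (summable_nat_add_iff 1).mpr
          (Real.summable_one_div_nat_pow.mpr (one_lt_two))
        refine this.congr (fun n => ?_)
        push_cast
        rw [one_div]
      have hsumA : Summable (fun i => a i * ‖w i‖ ^ 2) := by
        rw [show (fun i => a i * ‖w i‖ ^ 2) = fun i =>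
          if h : ∃ n, j n = i then (((Nat.find h : ℝ) + 1) ^ 2)⁻¹ else 0 from
          funext haw]
        rw [← summable_subtype_and_compl (s := Set.range j)]
        constructor
        · have hinj : Function.Injective
              (fun x : Set.range j => Nat.find (Set.mem_range.mp x.2)) := by
            rintro ⟨x, hx⟩ ⟨y, hy⟩ hxy
            simp only at hxy
            have e1 := Nat.find_spec (Set.mem_range.mp hx)
            have e2 := Nat.find_spec (Set.mem_range.mp hy)
            refine Subtype.ext ?_
            show x = y
            rw [← e1, ← e2, hxy]
          refine (hf.comp_injective hinj).congr (fun x => ?_)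
          simp only [Function.comp]
          rw [dif_pos (Set.mem_range.mp x.2)]
        · refine summable_zero.congr (fun x => ?_)
          rw [dif_neg]
          exact fun hmem => x.2 (Set.mem_range.mpr hmem)
      obtain ⟨-, hsumB⟩ := h w hw0 hsumA
      -- each term over the range of j exceeds 1
      have hterm : ∀ i (h : ∃ n, j n = i), 1 < b i * ‖w i‖ ^ 2 := by
        intro i h
        have hai := harange i h
        have hbi := hbrange i h
        have hm : (0 : ℝ) < ((Nat.find h : ℝ) + 1) ^ 2 := by positivity
        rw [hwnorm i h]
        rw [show b i * ((((Nat.find h : ℝ) + 1) ^ 2)⁻¹ * (a i)⁻¹)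
          = b i / (((Nat.find h : ℝ) + 1) ^ 2 * a i) by field_simp]
        rw [lt_div_iff₀ (by positivity)]
        linarith
      -- summability forces all but finitely many terms below 1
      have hfin : (Set.range j).Finite := by
        have hcf := hsumB.tendsto_cofinite_zero
        have hev : ∀ᶠ i in Filter.cofinite, b i * ‖w i‖ ^ 2 < 1 :=
          hcf.eventually_lt_const one_pos
        rw [Filter.eventually_cofinite] at hev
        refine hev.subset (fun i hi => ?_)
        obtain ⟨n, rfl⟩ := hi
        exact not_lt.mpr (hterm _ ⟨n, rfl⟩).le
      -- pigeonhole: some fiber of j is infinite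
      haveI := hfin.to_subtype
      obtain ⟨⟨i, hi⟩, hfib⟩ := Finite.exists_infinite_fiber
        (fun n : ℕ => (⟨j n, Set.mem_range_self n⟩ : Set.range j))
      have hfib2 : ∀ x : ((fun n : ℕ => (⟨j n, Set.mem_range_self n⟩ : Set.range j)) ⁻¹'
          {⟨i, hi⟩}), j x.1 = i := by
        rintro ⟨x, hx⟩
        have hx' : (⟨j x, Set.mem_range_self x⟩ : Set.range j) = ⟨i, hi⟩ := hx
        exact congrArg Subtype.val hx'
      have hfib' : {n : ℕ | j n = i}.Infinite := by
        rw [← Set.infinite_coe_iff]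
        refine Infinite.of_injective (fun x => (⟨x.1, hfib2 x⟩ : {n : ℕ | j n = i})) ?_
        rintro ⟨x, hx⟩ ⟨y, hy⟩ hxy
        simpa [Subtype.ext_iff] using hxy
      -- but the fiber must be bounded, contradiction
      have hai : 0 < a i := harange i ⟨_, (hfib'.nonempty.choose_spec : _)⟩
      obtain ⟨n, hn, hgt⟩ := hfib'.exists_gt ⌈b i / a i⌉₊
      have hji : j n = i := hn
      have h2 := hj2 n
      rw [hji] at h2
      have hle : b i / a i ≤ (n : ℝ) := le_trans (Nat.le_ceil _)
        (by exact_mod_cast hgt.le)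
      have : b i ≤ (n : ℝ) * a i := by
        rw [div_le_iff₀ hai] at hle
        linarith
      have hn2 : (n : ℝ) ≤ ((n : ℝ) + 1) ^ 2 := by nlinarith [sq_nonneg ((n : ℝ))]
      have := mul_le_mul_of_nonneg_right hn2 hai.le
      linarith
end

section
/- Let ι be an index set, let (E_j)_{j∈ι} be real inner product spaces each containing a nonzero vector, and let c : ι → (0,∞). In the Hilbert space lp(E,2), consider the ellipsoid K := { w ∈ lp(E,2) : ∑_{j∈ι} c_j⁻¹ ‖w_j‖² ≤ 1 }. Then K is totally bounded in lp(E,2) if and only if every E_j is finite-dimensional and for every δ > 0 the set { j ∈ ι : c_j ≥ δ } is finite. -/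
open scoped ENNReal

/-! The ball of radius `√(c j)` in `E j` sits isometrically inside `K` through `lp.single`. So if
`K` is totally bounded, each `E j` has a totally bounded ball and is finite dimensional (Riesz), and
vectors of norm `√(c j)` in the coordinates with `c j ≥ δ` form a `√δ`-separated family in `K`,
which must be finite. Conversely, off the finite set `S = {j | c j ≥ δ}` the tail of any `w ∈ K`
has norm at most `√δ`, while the part of `w` supported on `S` ranges over a bounded, hence
relatively compact, subset of the finite-dimensional space `∀ j : S, E j`. -/

lemma TotallyBounded.finite_of_pairwise_le_dist {α X : Type*} [PseudoMetricSpace X] {s : Set X}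
    (hs : TotallyBounded s) {f : α → X} (hfs : ∀ i, f i ∈ s) {r : ℝ} (hr : 0 < r)
    (hf : Pairwise fun i j => r ≤ dist (f i) (f j)) : Finite α := by
  obtain ⟨t, htf, hcov⟩ := Metric.totallyBounded_iff.1 hs (r / 2) (half_pos hr)
  have hnear : ∀ i, ∃ y : t, f i ∈ Metric.ball (y : X) (r / 2) := fun i => by
    simpa using hcov (hfs i)
  choose g hg using hnear
  have : Finite t := htf
  refine Finite.of_injective g fun i j hij => by_contra fun hne => ?_
  have hi := Metric.mem_ball.1 (hg i)
  have hj := Metric.mem_ball.1 (hg j)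
  rw [← hij] at hj
  linarith [hf hne, dist_triangle_right (f i) (f j) (g i)]

lemma totallyBounded_of_forall_exists_totallyBounded_dist_lt {X : Type*} [PseudoMetricSpace X]
    {s : Set X} (h : ∀ ε > 0, ∃ t, TotallyBounded t ∧ ∀ x ∈ s, ∃ y ∈ t, dist x y < ε) :
    TotallyBounded s := by
  refine Metric.totallyBounded_iff.2 fun ε hε => ?_
  obtain ⟨t, ht, hst⟩ := h (ε / 2) (half_pos hε)
  obtain ⟨u, huf, htu⟩ := Metric.totallyBounded_iff.1 ht (ε / 2) (half_pos hε)
  refine ⟨u, huf, fun x hx => ?_⟩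
  obtain ⟨y, hyt, hxy⟩ := hst x hx
  obtain ⟨z, hzu, hyz⟩ := Set.mem_iUnion₂.1 (htu hyt)
  refine Set.mem_biUnion hzu (Metric.mem_ball.2 ?_)
  linarith [dist_triangle x y z, Metric.mem_ball.1 hyz]

namespace lp

variable {ι : Type*} {E : ι → Type*} [∀ j, NormedAddCommGroup (E j)] {p : ℝ≥0∞}
  [DecidableEq ι]

lemma sub_sum_single_apply (f : lp E p) (s : Finset ι) (j : ι) :
    (f - ∑ i ∈ s, lp.single p i (f i)) j = if j ∈ s then 0 else f j := by
  simp only [coeFn_sub, coeFn_sum, lp.coeFn_single, Pi.sub_apply, Finset.sum_apply,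
    Finset.sum_pi_single]
  split_ifs <;> simp

lemma totallyBounded_image_sum_single [Fact (1 ≤ p)] [∀ j, ProperSpace (E j)] (s : Finset ι)
    (R : ℝ) :
    TotallyBounded ((fun f : lp E p => ∑ i ∈ s, lp.single p i (f i)) ''
      {f | ∀ i ∈ s, ‖f i‖ ≤ R}) := by
  let T : (∀ i : s, E i) → lp E p := fun x => ∑ i : s, lp.single p i (x i)
  have hT : Continuous T :=
    continuous_finsetSum _ fun i _ => (isometry_single (i : ι)).continuous.comp (continuous_apply i)
  refine ((isCompact_closedBall 0 (max R 0)).image hT).totallyBounded.subset ?_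
  rintro _ ⟨f, hf, rfl⟩
  refine ⟨fun i => f i, ?_, Finset.sum_coe_sort s fun i => lp.single p i (f i)⟩
  exact mem_closedBall_zero_iff.2 <| (pi_norm_le_iff_of_nonneg (le_max_right R 0)).2
    fun i => (hf i i.2).trans (le_max_left R 0)

end lp

section Ellipsoid

variable {ι : Type*} (E : ι → Type*) [∀ j, NormedAddCommGroup (E j)]

def ellipsoid (c : ι → ℝ) : Set (lp E 2) :=
  {w | ∑' j, ENNReal.ofReal ((c j)⁻¹ * ‖w j‖ ^ 2) ≤ 1}

variable {E} {c : ι → ℝ}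

lemma sum_le_one_of_mem_ellipsoid (hc : ∀ j, 0 ≤ c j) {w : lp E 2} (hw : w ∈ ellipsoid E c)
    (s : Finset ι) : ∑ j ∈ s, (c j)⁻¹ * ‖w j‖ ^ 2 ≤ 1 := by
  have hnn : ∀ j ∈ s, 0 ≤ (c j)⁻¹ * ‖w j‖ ^ 2 := fun j _ => by have := hc j; positivity
  rw [← ENNReal.ofReal_le_one, ENNReal.ofReal_sum_of_nonneg hnn]
  exact (ENNReal.sum_le_tsum s).trans hw

lemma norm_sq_le_of_mem_ellipsoid (hc : ∀ j, 0 < c j) {w : lp E 2} (hw : w ∈ ellipsoid E c)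
    (j : ι) : ‖w j‖ ^ 2 ≤ c j := by
  have := sum_le_one_of_mem_ellipsoid (fun j => (hc j).le) hw {j}
  rwa [Finset.sum_singleton, inv_mul_le_one₀ (hc j)] at this

lemma single_mem_ellipsoid [DecidableEq ι] {j : ι} {a : E j} (ha : ‖a‖ ^ 2 ≤ c j) :
    lp.single 2 j a ∈ ellipsoid E c := by
  have hzero : ∀ i ≠ j, ENNReal.ofReal ((c i)⁻¹ * ‖lp.single 2 j a i‖ ^ 2) = 0 := fun i hi => by
    simp [Pi.single_eq_of_ne hi]
  rw [ellipsoid, Set.mem_ofPred_eq, tsum_eq_single j hzero, lp.single_apply_self,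
    ENNReal.ofReal_le_one]
  exact inv_mul_le_one_of_le₀ ha ((sq_nonneg _).trans ha)

lemma norm_sub_sum_single_le_of_mem_ellipsoid [DecidableEq ι] (hc : ∀ j, 0 < c j) {w : lp E 2}
    (hw : w ∈ ellipsoid E c) {δ : ℝ} (hδ : 0 ≤ δ) {s : Finset ι} (hs : ∀ j ∉ s, c j ≤ δ) :
    ‖w - ∑ j ∈ s, lp.single 2 j (w j)‖ ≤ √δ := by
  have hcoord : ∀ j, ‖(w - ∑ j ∈ s, lp.single 2 j (w j)) j‖ ^ 2 ≤ δ * ((c j)⁻¹ * ‖w j‖ ^ 2) := by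
    intro j
    rw [lp.sub_sum_single_apply]
    split_ifs with hj
    · rw [norm_zero, zero_pow two_ne_zero]; have := hc j; positivity
    · calc ‖w j‖ ^ 2 = c j * ((c j)⁻¹ * ‖w j‖ ^ 2) := by field_simp [(hc j).ne']
        _ ≤ δ * ((c j)⁻¹ * ‖w j‖ ^ 2) := by have := hc j; gcongr; exact hs j hj
  refine lp.norm_le_of_forall_sum_le (by norm_num) (Real.sqrt_nonneg δ) fun t => ?_
  simp only [ENNReal.toReal_ofNat, Real.rpow_two, Real.sq_sqrt hδ]
  calc ∑ j ∈ t, ‖(w - ∑ j ∈ s, lp.single 2 j (w j)) j‖ ^ 2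
      ≤ ∑ j ∈ t, δ * ((c j)⁻¹ * ‖w j‖ ^ 2) := Finset.sum_le_sum fun j _ => hcoord j
    _ = δ * ∑ j ∈ t, (c j)⁻¹ * ‖w j‖ ^ 2 := (Finset.mul_sum ..).symm
    _ ≤ δ * 1 := by gcongr; exact sum_le_one_of_mem_ellipsoid (fun j => (hc j).le) hw t
    _ = δ := mul_one δ

variable [∀ j, NormedSpace ℝ (E j)]

lemma finiteDimensional_of_totallyBounded_ellipsoid (hc : ∀ j, 0 < c j)
    (hK : TotallyBounded (ellipsoid E c)) (j : ι) : FiniteDimensional ℝ (E j) := by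
  classical
  have hball : lp.single 2 j '' Metric.closedBall 0 √(c j) ⊆ ellipsoid E c := by
    rintro _ ⟨a, ha, rfl⟩
    exact single_mem_ellipsoid <| (Real.le_sqrt (norm_nonneg a) (hc j).le).1 <|
      mem_closedBall_zero_iff.1 ha
  refine FiniteDimensional.of_totallyBounded_nhds_zero ℝ
    (Metric.closedBall_mem_nhds 0 (Real.sqrt_pos.2 (hc j))) ?_
  exact (totallyBounded_image_iff (lp.isometry_single j).isUniformInducing).1 (hK.subset hball)

lemma finite_setOf_le_of_totallyBounded_ellipsoid [∀ j, Nontrivial (E j)]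
    (hK : TotallyBounded (ellipsoid E c)) {δ : ℝ} (hδ : 0 < δ) : {j | δ ≤ c j}.Finite := by
  classical
  choose u hu using fun j => exists_norm_eq (E j) (Real.sqrt_nonneg (c j))
  let f : {j // δ ≤ c j} → lp E 2 := fun j => lp.single 2 j (u j)
  have hfK : ∀ j, f j ∈ ellipsoid E c := fun j =>
    single_mem_ellipsoid (by rw [hu, Real.sq_sqrt (hδ.le.trans j.2)])
  have hsep : Pairwise fun j k => √δ ≤ dist (f j) (f k) := by
    intro j k hjk
    calc √δ ≤ √(c j) := Real.sqrt_le_sqrt j.2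
      _ = ‖(f j - f k) j‖ := by
        simp [f, Pi.single_eq_of_ne (Subtype.coe_injective.ne hjk), hu]
      _ ≤ dist (f j) (f k) := dist_eq_norm (f j) (f k) ▸ lp.norm_apply_le_norm two_ne_zero _ _
  exact Set.finite_coe_iff.1 (hK.finite_of_pairwise_le_dist hfK (Real.sqrt_pos.2 hδ) hsep)

lemma totallyBounded_ellipsoid [∀ j, FiniteDimensional ℝ (E j)] (hc : ∀ j, 0 < c j)
    (hfin : ∀ δ : ℝ, 0 < δ → {j | δ ≤ c j}.Finite) : TotallyBounded (ellipsoid E c) := by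
  classical
  refine totallyBounded_of_forall_exists_totallyBounded_dist_lt fun ε hε => ?_
  let s := (hfin ((ε / 2) ^ 2) (by positivity)).toFinset
  refine ⟨_, lp.totallyBounded_image_sum_single s (∑ j ∈ s, √(c j)),
    fun w hw => ⟨_, ⟨w, fun j hj => ?_, rfl⟩, ?_⟩⟩
  · calc ‖w j‖ ≤ √(c j) :=
          (Real.le_sqrt (norm_nonneg _) (hc j).le).2 (norm_sq_le_of_mem_ellipsoid hc hw j)
      _ ≤ ∑ j ∈ s, √(c j) := Finset.single_le_sum (fun i _ => Real.sqrt_nonneg (c i)) hj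
  · have hs : ∀ j ∉ s, c j ≤ (ε / 2) ^ 2 := fun j hj => by
      simp only [s, Set.Finite.mem_toFinset, Set.mem_ofPred_eq, not_le] at hj
      exact hj.le
    calc dist w _ ≤ √((ε / 2) ^ 2) := by
          rw [dist_eq_norm]
          exact norm_sub_sum_single_le_of_mem_ellipsoid hc hw (by positivity) hs
      _ < ε := by rw [Real.sqrt_sq (by positivity)]; linarith

end Ellipsoid

/-- Proposition 1(b).
In the Hilbert space `lp E 2` of square-summable families `(w j)` with `w j ∈ E j`, the
ellipsoid `K = { w : ∑ c j⁻¹ ‖w j‖² ≤ 1 }` (with `c j > 0`) is totally bounded if and only if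
every `E j` is finite dimensional and for every `δ > 0` the set `{ j : c j ≥ δ }` is finite. -/
theorem stmt3 {ι : Type*} (E : ι → Type*) [∀ j, NormedAddCommGroup (E j)]
    [∀ j, InnerProductSpace ℝ (E j)] (hE : ∀ j, ∃ v : E j, v ≠ 0)
    (c : ι → ℝ) (hc : ∀ j, 0 < c j) :
    TotallyBounded {w : lp E 2 | ∑' j, ENNReal.ofReal ((c j)⁻¹ * ‖w j‖ ^ 2) ≤ 1} ↔
    ((∀ j, FiniteDimensional ℝ (E j)) ∧ ∀ δ : ℝ, 0 < δ → {j | δ ≤ c j}.Finite) := by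
  have : ∀ j, Nontrivial (E j) := fun j => by
    obtain ⟨v, hv⟩ := hE j
    exact nontrivial_of_ne v 0 hv
  change TotallyBounded (ellipsoid E c) ↔ _
  constructor
  · intro hK
    exact ⟨finiteDimensional_of_totallyBounded_ellipsoid hc hK,
      fun δ => finite_setOf_le_of_totallyBounded_ellipsoid hK⟩
  · rintro ⟨_, hfin⟩
    exact totallyBounded_ellipsoid hc hfin
end

section
/- Let H be a real Hilbert space and (J,≤) a partially ordered set with a least element ⊥ in which every principal down-set {i ∈ J : i ≤ j} is finite. Let (W_i)_{i∈J} be pairwise orthogonal closed subspaces of H with W_⊥ ≠ {0}, set V_j := ∑_{i ≤ j} W_i, and let a : J → (0,∞). Then the seminorm |f|²_{V,a} := inf { ∑_{j∈F} a_j ‖v_j‖² : F ⊆ J finite, v_j ∈ V_j, ∑_{j∈F} v_j = f } is positive definite on the algebraic span of the subspaces W_i (i.e., |f|_{V,a} = 0 implies f = 0) if and only if ∑_{j∈J} a_j⁻¹ < ∞. -/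
/-!
If `A = ∑ j, (a j)⁻¹` is finite, the triangle inequality and the Cauchy–Schwarz inequality give
`‖∑ v j‖² ≤ (∑ (a j)⁻¹) (∑ a j ‖v j‖²) ≤ A · (cost of the decomposition)`, so `‖f‖² ≤ A |f|²_{V,a}`
and `|f|_{V,a} = 0` forces `f = 0`. Conversely, a nonzero `w ∈ W ⊥` lies in every `V j`, and
splitting it as `∑_{j ∈ F} ((a j)⁻¹ / s_F) • w` with `s_F = ∑_{j ∈ F} (a j)⁻¹` costs `‖w‖² / s_F`,
which becomes arbitrarily small when the partial sums of `(a j)⁻¹` are unbounded.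
-/

open Finset

lemma sq_norm_sum_le_sum_inv_mul_sum_mul_sq {ι E : Type*} [SeminormedAddCommGroup E]
    (F : Finset ι) (v : ι → E) {a : ι → ℝ} (ha : ∀ j ∈ F, 0 < a j) :
    ‖∑ j ∈ F, v j‖ ^ 2 ≤ (∑ j ∈ F, (a j)⁻¹) * ∑ j ∈ F, a j * ‖v j‖ ^ 2 :=
  calc ‖∑ j ∈ F, v j‖ ^ 2 ≤ (∑ j ∈ F, ‖v j‖) ^ 2 :=
        pow_le_pow_left₀ (norm_nonneg _) (norm_sum_le F v) 2
    _ ≤ _ := sum_sq_le_sum_mul_sum_of_sq_le_mul F (fun j hj => (inv_pos.2 (ha j hj)).le)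
        (fun j hj => mul_nonneg (ha j hj).le (sq_nonneg _))
        fun j hj => by rw [inv_mul_cancel_left₀ (ha j hj).ne']

section

variable {H J : Type*} [NormedAddCommGroup H] [NormedSpace ℝ H] [Preorder J]

/-- The costs of all decompositions of `f` along `V j = ⨆ i ≤ j, W i`; their infimum is
`|f|²_{V,a}`. -/
def decompositionCosts (W : J → Submodule ℝ H) (a : J → ℝ) (f : H) : Set ℝ :=
  {r | ∃ (F : Finset J) (v : J → H), (∀ j ∈ F, v j ∈ (⨆ i ≤ j, W i : Submodule ℝ H)) ∧
    (∑ j ∈ F, v j) = f ∧ r = ∑ j ∈ F, a j * ‖v j‖ ^ 2}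

variable {W : J → Submodule ℝ H} {a : J → ℝ} {f : H}

lemma nonneg_of_mem_decompositionCosts (ha : ∀ j, 0 < a j) {r : ℝ}
    (hr : r ∈ decompositionCosts W a f) : 0 ≤ r := by
  obtain ⟨F, v, -, -, rfl⟩ := hr
  exact sum_nonneg fun j _ => mul_nonneg (ha j).le (sq_nonneg _)

lemma decompositionCosts_nonempty (hf : f ∈ ⨆ i, W i) : (decompositionCosts W a f).Nonempty := by
  obtain ⟨c, hc, rfl⟩ := (Submodule.mem_iSup_iff_exists_finsupp _ _).1 hf
  exact ⟨_, c.support, c,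
    fun j _ => Submodule.mem_iSup_of_mem j (Submodule.mem_iSup_of_mem le_rfl (hc j)), rfl, rfl⟩

lemma sq_norm_le_tsum_inv_mul_of_mem_decompositionCosts (ha : ∀ j, 0 < a j)
    (hsum : Summable fun j => (a j)⁻¹) {r : ℝ} (hr : r ∈ decompositionCosts W a f) :
    ‖f‖ ^ 2 ≤ (∑' j, (a j)⁻¹) * r := by
  obtain ⟨F, v, -, rfl, rfl⟩ := hr
  calc ‖∑ j ∈ F, v j‖ ^ 2 ≤ (∑ j ∈ F, (a j)⁻¹) * ∑ j ∈ F, a j * ‖v j‖ ^ 2 :=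
        sq_norm_sum_le_sum_inv_mul_sum_mul_sq F v fun j _ => ha j
    _ ≤ (∑' j, (a j)⁻¹) * ∑ j ∈ F, a j * ‖v j‖ ^ 2 :=
        mul_le_mul_of_nonneg_right (hsum.sum_le_tsum F fun j _ => (inv_pos.2 (ha j)).le)
          (sum_nonneg fun j _ => mul_nonneg (ha j).le (sq_nonneg _))

lemma eq_zero_of_sInf_decompositionCosts_eq_zero (ha : ∀ j, 0 < a j)
    (hsum : Summable fun j => (a j)⁻¹) (hf : f ∈ ⨆ i, W i)
    (h0 : sInf (decompositionCosts W a f) = 0) : f = 0 := by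
  have hA : 0 ≤ ∑' j, (a j)⁻¹ := tsum_nonneg fun j => (inv_pos.2 (ha j)).le
  have hle : ‖f‖ ^ 2 ≤ (∑' j, (a j)⁻¹) * sInf (decompositionCosts W a f) := by
    rw [← smul_eq_mul, ← Real.sInf_smul_of_nonneg hA]
    refine le_csInf ((decompositionCosts_nonempty hf).smul_set) ?_
    rintro _ ⟨r, hr, rfl⟩
    exact sq_norm_le_tsum_inv_mul_of_mem_decompositionCosts ha hsum hr
  rw [h0, mul_zero] at hle
  exact norm_eq_zero.1 (pow_eq_zero_iff two_ne_zero |>.1 (le_antisymm hle (sq_nonneg _)))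

lemma sq_norm_div_sum_inv_mem_decompositionCosts [OrderBot J] {w : H} (hw : w ∈ W ⊥)
    (ha : ∀ j, 0 < a j) (F : Finset J) (hF : (∑ j ∈ F, (a j)⁻¹) ≠ 0) :
    ‖w‖ ^ 2 / ∑ j ∈ F, (a j)⁻¹ ∈ decompositionCosts W a w := by
  set s := ∑ j ∈ F, (a j)⁻¹
  have hwV : ∀ j, w ∈ (⨆ i ≤ j, W i : Submodule ℝ H) := fun j =>
    Submodule.mem_iSup_of_mem ⊥ (Submodule.mem_iSup_of_mem bot_le hw)
  refine ⟨F, fun j => ((a j)⁻¹ / s) • w, fun j _ => Submodule.smul_mem _ _ (hwV j),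
    by rw [← sum_smul, ← sum_div, div_self hF, one_smul], ?_⟩
  have hterm : ∀ j ∈ F, a j * ‖((a j)⁻¹ / s) • w‖ ^ 2 = (a j)⁻¹ * (‖w‖ ^ 2 / s ^ 2) := by
    intro j _
    have haj : a j ≠ 0 := (ha j).ne'
    rw [norm_smul, Real.norm_eq_abs, mul_pow, sq_abs]
    field_simp
  rw [sum_congr rfl hterm, ← sum_mul, sq s, ← div_div, mul_div_cancel₀ _ hF]

lemma sInf_decompositionCosts_eq_zero_of_not_summable [OrderBot J] (ha : ∀ j, 0 < a j)
    (hns : ¬Summable fun j => (a j)⁻¹) {w : H} (hw : w ∈ W ⊥) :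
    sInf (decompositionCosts W a w) = 0 := by
  refine le_antisymm (le_of_forall_gt_imp_ge_of_dense fun ε hε => ?_)
    (Real.sInf_nonneg fun r hr => nonneg_of_mem_decompositionCosts ha hr)
  obtain ⟨F, hF⟩ : ∃ F : Finset J, ‖w‖ ^ 2 / ε < ∑ j ∈ F, (a j)⁻¹ := by
    by_contra! h
    exact hns (summable_of_sum_le (fun j => (inv_pos.2 (ha j)).le) h)
  have hs : 0 < ∑ j ∈ F, (a j)⁻¹ := (div_nonneg (sq_nonneg _) hε.le).trans_lt hF
  calc sInf (decompositionCosts W a w) ≤ ‖w‖ ^ 2 / ∑ j ∈ F, (a j)⁻¹ :=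
        csInf_le ⟨0, fun r hr => nonneg_of_mem_decompositionCosts ha hr⟩
          (sq_norm_div_sum_inv_mem_decompositionCosts hw ha F hs.ne')
    _ ≤ ε := (div_le_iff₀ hs).2 (by rw [div_lt_iff₀ hε] at hF; linarith)

end

theorem stmt6_general {H : Type*} [NormedAddCommGroup H] [InnerProductSpace ℝ H]
    {J : Type*} [PartialOrder J] [OrderBot J]
    (W : J → Submodule ℝ H)
    (hbot : W ⊥ ≠ ⊥)
    (a : J → ℝ) (ha : ∀ j, 0 < a j) :
    (∀ f ∈ (⨆ i, W i : Submodule ℝ H),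
        sInf {r : ℝ | ∃ (F : Finset J) (v : J → H),
            (∀ j ∈ F, v j ∈ (⨆ i ≤ j, W i : Submodule ℝ H)) ∧
            (∑ j ∈ F, v j) = f ∧ r = ∑ j ∈ F, a j * ‖v j‖ ^ 2} = 0 → f = 0) ↔
    Summable (fun j => (a j)⁻¹) := by
  change (∀ f ∈ (⨆ i, W i : Submodule ℝ H), sInf (decompositionCosts W a f) = 0 → f = 0) ↔ _
  constructor
  · intro hpd
    by_contra hns
    obtain ⟨w, hw, hw0⟩ := (Submodule.ne_bot_iff _).1 hbot
    exact hw0 (hpd w (Submodule.mem_iSup_of_mem ⊥ hw)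
      (sInf_decompositionCosts_eq_zero_of_not_summable ha hns hw))
  · exact fun hsum f hf => eq_zero_of_sInf_decompositionCosts_eq_zero ha hsum hf

/-- Proposition 4(a).
Let `H` be a real Hilbert space, `(J, ≤)` a partially ordered set with least element `⊥`, in
which every principal down-set is finite, `(W i)` pairwise orthogonal closed subspaces of `H`
with `W ⊥ ≠ {0}`, `V j = ∑_{i ≤ j} W i`, and `a : J → (0,∞)`.  Then the seminorm
`|f|²_{V,a} = inf { ∑_{j∈F} a j ‖v j‖² : v j ∈ V j, ∑_{j∈F} v j = f }` is positive definite on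
the algebraic span of the `W i` if and only if `∑ j, (a j)⁻¹ < ∞`. -/
theorem stmt6 {H : Type*} [NormedAddCommGroup H] [InnerProductSpace ℝ H] [CompleteSpace H]
    {J : Type*} [PartialOrder J] [OrderBot J]
    (hJ : ∀ j : J, {i | i ≤ j}.Finite)
    (W : J → Submodule ℝ H) (hWc : ∀ i, IsClosed (W i : Set H))
    (hortho : ∀ i j, i ≠ j → ∀ u ∈ W i, ∀ v ∈ W j, inner ℝ u v = (0 : ℝ))
    (hbot : W ⊥ ≠ ⊥)
    (a : J → ℝ) (ha : ∀ j, 0 < a j) :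
    (∀ f ∈ (⨆ i, W i : Submodule ℝ H),
        sInf {r : ℝ | ∃ (F : Finset J) (v : J → H),
            (∀ j ∈ F, v j ∈ (⨆ i ≤ j, W i : Submodule ℝ H)) ∧
            (∑ j ∈ F, v j) = f ∧ r = ∑ j ∈ F, a j * ‖v j‖ ^ 2} = 0 → f = 0) ↔
    Summable (fun j => (a j)⁻¹) :=
  stmt6_general W hbot a ha
end

section
/- Let H be a real Hilbert space, J an index set, (V_j)_{j∈J} a family of linear subspaces of H, and e ∈ H a nonzero vector with e ∈ V_j for every j ∈ J. Let a : J → (0,∞) be such that the family (a_j⁻¹)_{j∈J} is not summable. Then inf { ∑_{j∈F} a_j ‖v_j‖² : F ⊆ J finite, v_j ∈ V_j, ∑_{j∈F} v_j = e } = 0. -/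
/-- 'in particular' claim of Proposition 4(a).
Let `H` be a real Hilbert space, `(V j)` a family of subspaces all containing a fixed nonzero
vector `e`, and `a : J → (0,∞)` with `(a j⁻¹)` not summable.  Then the infimum of
`∑_{j∈F} a j ‖v j‖²` over all finite decompositions `e = ∑_{j∈F} v j` with `v j ∈ V j`
is zero. -/
theorem stmt8 {H : Type*} [NormedAddCommGroup H] [InnerProductSpace ℝ H]
    {J : Type*} (V : J → Submodule ℝ H) (e : H) (he : e ≠ 0) (heV : ∀ j, e ∈ V j)
    (a : J → ℝ) (ha : ∀ j, 0 < a j) (hns : ¬ Summable fun j => (a j)⁻¹) :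
    sInf {r : ℝ | ∃ (F : Finset J) (v : J → H), (∀ j ∈ F, v j ∈ V j) ∧
        (∑ j ∈ F, v j) = e ∧ r = ∑ j ∈ F, a j * ‖v j‖ ^ 2} = 0 := by
  set S : Set ℝ := {r : ℝ | ∃ (F : Finset J) (v : J → H), (∀ j ∈ F, v j ∈ V j) ∧
      (∑ j ∈ F, v j) = e ∧ r = ∑ j ∈ F, a j * ‖v j‖ ^ 2} with hS
  -- key: for any c, some finite sum of a⁻¹ exceeds c
  have key : ∀ c : ℝ, ∃ F : Finset J, c < ∑ j ∈ F, (a j)⁻¹ := by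
    intro c
    by_contra h
    push_neg at h
    exact hns (summable_of_sum_le (fun j => (inv_pos.mpr (ha j)).le) h)
  -- for any c > 0, produce an element of S less than ‖e‖²/c ... directly:
  have mem : ∀ ε : ℝ, 0 < ε → ∃ r ∈ S, r < ε := by
    intro ε hε
    obtain ⟨F, hF⟩ := key (‖e‖ ^ 2 / ε)
    have hepos : (0:ℝ) < ‖e‖ ^ 2 := pow_pos (norm_pos_iff.mpr he) 2
    have hc : (0:ℝ) < ‖e‖ ^ 2 / ε := by positivity
    set s := ∑ j ∈ F, (a j)⁻¹ with hs
    have hspos : 0 < s := lt_trans hc hF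
    refine ⟨∑ j ∈ F, a j * ‖((a j)⁻¹ / s) • e‖ ^ 2, ⟨F, fun j => ((a j)⁻¹ / s) • e,
      fun j _ => (V j).smul_mem _ (heV j), ?_, rfl⟩, ?_⟩
    · rw [← Finset.sum_smul]
      rw [← Finset.sum_div, ← hs, div_self hspos.ne', one_smul]
    · have hcalc : ∀ j ∈ F, a j * ‖((a j)⁻¹ / s) • e‖ ^ 2
          = (a j)⁻¹ / s ^ 2 * ‖e‖ ^ 2 := by
        intro j _
        rw [norm_smul, Real.norm_eq_abs,
          abs_of_pos (div_pos (inv_pos.mpr (ha j)) hspos), mul_pow, div_pow]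
        linear_combination ((a j)⁻¹ / s ^ 2 * ‖e‖ ^ 2) * mul_inv_cancel₀ (ha j).ne'
      rw [Finset.sum_congr rfl hcalc, ← Finset.sum_mul, ← Finset.sum_div, ← hs]
      have : s / s ^ 2 * ‖e‖ ^ 2 = ‖e‖ ^ 2 / s := by
        field_simp
      rw [this]
      rw [div_lt_iff₀ hspos]
      calc ‖e‖ ^ 2 = (‖e‖ ^ 2 / ε) * ε := by field_simp
        _ < s * ε := by exact mul_lt_mul_of_pos_right hF hε
        _ = ε * s := mul_comm _ _
  have hnonneg : ∀ r ∈ S, (0:ℝ) ≤ r := by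
    rintro r ⟨F, v, _, _, rfl⟩
    exact Finset.sum_nonneg fun j _ => mul_nonneg (ha j).le (by positivity)
  obtain ⟨r₀, hr₀, _⟩ := mem 1 one_pos
  refine csInf_eq_of_forall_ge_of_forall_gt_exists_lt ⟨r₀, hr₀⟩ hnonneg ?_
  intro w hw
  exact mem w hw
end

section
/- Let s : ℕ → (0,∞) and let γ be a [0,∞]-valued function on the set of finite subsets of ℕ. Then, as unordered sums in [0,∞], ∑_{j} γ(supp(j)) · ∏_{k ∈ supp(j)} 2^{−2 s_k j_k} = ∑_{ω} γ(ω) · ∏_{k ∈ ω} 2^{−2 s_k} / (1 − 2^{−2 s_k}), where the sum on the left runs over all multi-indices j (finitely supported functions j : ℕ → ℕ) and the sum on the right runs over all finite subsets ω of ℕ. -/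
open scoped ENNReal

noncomputable def fromPair (ω : Finset ℕ) (f : ω → ℕ) : ℕ →₀ ℕ :=
  ⟨ω, fun k => if h : k ∈ ω then f ⟨k, h⟩ + 1 else 0, by
    intro a
    constructor
    · intro h; simp [h]
    · intro h; by_contra hc; simp [hc] at h⟩

@[simp] lemma fromPair_support (ω : Finset ℕ) (f : ω → ℕ) : (fromPair ω f).support = ω := rfl

lemma fromPair_apply (ω : Finset ℕ) (f : ω → ℕ) (k : ω) :
    fromPair ω f k = f k + 1 := by
  simp [fromPair, Finsupp.coe_mk, k.2]

noncomputable def multiEquiv : (ℕ →₀ ℕ) ≃ Σ ω : Finset ℕ, (ω → ℕ) where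
  toFun j := ⟨j.support, fun k => j k - 1⟩
  invFun p := fromPair p.1 p.2
  left_inv j := by
    ext k
    by_cases h : k ∈ j.support
    · have hne := Finsupp.mem_support_iff.mp h
      simp only [fromPair, Finsupp.coe_mk, h, dif_pos]
      omega
    · have := Finsupp.notMem_support_iff.mp h
      simp only [fromPair, Finsupp.coe_mk, this]
      simp [h]
  right_inv p := by
    obtain ⟨ω, f⟩ := p
    show (⟨ω, fun k : ω => fromPair ω f k - 1⟩ : Σ ω : Finset ℕ, (ω → ℕ)) = ⟨ω, f⟩
    congr 1
    funext k
    rw [fromPair_apply]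
    omega

noncomputable def insertEquiv (a : ℕ) (ω : Finset ℕ) (ha : a ∉ ω) :
    ({x // x ∈ insert a ω} → ℕ) ≃ ℕ × (ω → ℕ) where
  toFun f := (f ⟨a, Finset.mem_insert_self a ω⟩,
    fun k => f ⟨k, Finset.mem_insert_of_mem k.2⟩)
  invFun p := fun k => if h : (k : ℕ) = a then p.1 else
    p.2 ⟨k, by
      have := k.2
      rw [Finset.mem_insert] at this
      tauto⟩
  left_inv f := by
    funext k
    obtain ⟨k, hk⟩ := k
    by_cases h : k = a
    · subst h; simp
    · simp [h]
  right_inv p := by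
    obtain ⟨m, g⟩ := p
    refine Prod.ext (by simp) ?_
    funext k
    have hk : (k : ℕ) ≠ a := fun h => ha (h ▸ k.2)
    simp [hk]

lemma key (g : ℕ → ℕ → ℝ≥0∞) (ω : Finset ℕ) :
    ∑' f : ω → ℕ, ∏ k ∈ ω.attach, g k (f k) = ∏ k ∈ ω, ∑' m, g k m := by
  classical
  induction ω using Finset.induction_on with
  | empty =>
    simp only [Finset.attach_empty, Finset.prod_empty]
    exact tsum_eq_single default fun b hb => absurd (Subsingleton.elim b default) hb
  | @insert a ω ha ih =>
    rw [← (insertEquiv a ω ha).symm.tsum_eq]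
    have h1 : ∀ p : ℕ × (ω → ℕ),
        ∏ k ∈ (insert a ω).attach, g k ((insertEquiv a ω ha).symm p k)
          = g a p.1 * ∏ k ∈ ω.attach, g k (p.2 k) := by
      intro p
      rw [Finset.attach_insert, Finset.prod_insert, Finset.prod_image]
      · congr 1
        · simp [insertEquiv]
        · refine Finset.prod_congr rfl fun k _ => ?_
          have hk : (k : ℕ) ≠ a := fun h => ha (h ▸ k.2)
          simp [insertEquiv, hk]
      · intro x _ y _ h
        rw [Subtype.mk.injEq] at h
        exact Subtype.ext h
      · simp only [Finset.mem_image, Finset.mem_attach, true_and, not_exists]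
        intro x h
        have hx := congrArg Subtype.val h
        simp only at hx
        exact ha (hx ▸ x.2)
    calc ∑' p : ℕ × (ω → ℕ), ∏ k ∈ (insert a ω).attach, g k ((insertEquiv a ω ha).symm p k)
        = ∑' p : ℕ × (ω → ℕ), g a p.1 * ∏ k ∈ ω.attach, g k (p.2 k) := by
          exact tsum_congr h1
      _ = ∑' m : ℕ, ∑' f : ω → ℕ, g a m * ∏ k ∈ ω.attach, g k (f k) := ENNReal.tsum_prod'
      _ = ∑' m : ℕ, g a m * ∑' f : ω → ℕ, ∏ k ∈ ω.attach, g k (f k) := by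
          exact tsum_congr fun m => ENNReal.tsum_mul_left
      _ = (∑' m : ℕ, g a m) * ∑' f : ω → ℕ, ∏ k ∈ ω.attach, g k (f k) :=
          ENNReal.tsum_mul_right
      _ = ∏ k ∈ insert a ω, ∑' m, g k m := by rw [ih, Finset.prod_insert ha]

lemma geom (c : ℝ) (hc : 0 < c) :
    ∑' m : ℕ, ENNReal.ofReal ((2 : ℝ) ^ (-(c * ((m : ℝ) + 1)))) =
      ENNReal.ofReal ((2 : ℝ) ^ (-c) / (1 - (2 : ℝ) ^ (-c))) := by
  set r : ℝ := (2 : ℝ) ^ (-c) with hr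
  have hr0 : 0 < r := Real.rpow_pos_of_pos (by norm_num) _
  have hr1 : r < 1 := Real.rpow_lt_one_of_one_lt_of_neg (by norm_num) (by linarith)
  have hpow : ∀ m : ℕ, (2 : ℝ) ^ (-(c * ((m : ℝ) + 1))) = r ^ (m + 1) := by
    intro m
    rw [hr, ← Real.rpow_natCast (_ ^ (-c)) (m+1), ← Real.rpow_mul (by norm_num)]
    push_cast
    ring_nf
  have hlt : ENNReal.ofReal r < 1 := by
    rw [← ENNReal.ofReal_one]
    exact ENNReal.ofReal_lt_ofReal_iff_of_nonneg hr0.le |>.mpr hr1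
  calc ∑' m : ℕ, ENNReal.ofReal ((2 : ℝ) ^ (-(c * ((m : ℝ) + 1))))
      = ∑' m : ℕ, ENNReal.ofReal r ^ (m + 1) := by
        refine tsum_congr fun m => ?_
        rw [hpow m, ENNReal.ofReal_pow hr0.le]
    _ = ∑' m : ℕ, ENNReal.ofReal r * ENNReal.ofReal r ^ m := by
        refine tsum_congr fun m => by ring
    _ = ENNReal.ofReal r * ∑' m : ℕ, ENNReal.ofReal r ^ m := ENNReal.tsum_mul_left
    _ = ENNReal.ofReal r * (1 - ENNReal.ofReal r)⁻¹ := by rw [ENNReal.tsum_geometric]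
    _ = ENNReal.ofReal (r / (1 - r)) := by
        have h1 : (1 : ℝ≥0∞) - ENNReal.ofReal r = ENNReal.ofReal (1 - r) := by
          rw [ENNReal.ofReal_sub _ hr0.le, ENNReal.ofReal_one]
        rw [ENNReal.ofReal_div_of_pos (by linarith), div_eq_mul_inv, h1]

/-- Section 4 identity.
For `s : ℕ → (0,∞)` and `γ` a `[0,∞]`-valued function on finite subsets of `ℕ`, one has the
identity of unordered sums in `[0,∞]`:
`∑_j γ(supp j) ∏_{k ∈ supp j} 2^{-2 s_k j_k} = ∑_ω γ(ω) ∏_{k ∈ ω} 2^{-2 s_k}/(1 - 2^{-2 s_k})`,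
where `j` runs over all multi-indices (finitely supported `j : ℕ →₀ ℕ`) and `ω` over all
finite subsets of `ℕ`. -/
theorem stmt10 (s : ℕ → ℝ) (hs : ∀ k, 0 < s k) (γ : Finset ℕ → ℝ≥0∞) :
    ∑' j : ℕ →₀ ℕ, γ j.support *
        ∏ k ∈ j.support, ENNReal.ofReal ((2 : ℝ) ^ (-(2 * s k * (j k : ℝ)))) =
    ∑' ω : Finset ℕ, γ ω *
        ∏ k ∈ ω, ENNReal.ofReal ((2 : ℝ) ^ (-(2 * s k)) / (1 - (2 : ℝ) ^ (-(2 * s k)))) := by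
  rw [← multiEquiv.symm.tsum_eq]
  rw [ENNReal.tsum_sigma']
  refine tsum_congr fun ω => ?_
  have hterm : ∀ f : ω → ℕ,
      γ (fromPair ω f).support * ∏ k ∈ (fromPair ω f).support,
          ENNReal.ofReal ((2 : ℝ) ^ (-(2 * s k * ((fromPair ω f k) : ℝ)))) =
        γ ω * ∏ k ∈ ω.attach,
          ENNReal.ofReal ((2 : ℝ) ^ (-(2 * s k * (((f k : ℝ)) + 1)))) := by
    intro f
    rw [fromPair_support]
    congr 1
    rw [← Finset.prod_attach ω
      (fun k => ENNReal.ofReal ((2 : ℝ) ^ (-(2 * s k * ((fromPair ω f k) : ℝ)))))]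
    refine Finset.prod_congr rfl fun k _ => ?_
    rw [fromPair_apply]
    push_cast
    ring_nf
  calc ∑' f : ω → ℕ, γ (multiEquiv.symm ⟨ω, f⟩).support *
        ∏ k ∈ (multiEquiv.symm ⟨ω, f⟩).support,
          ENNReal.ofReal ((2 : ℝ) ^ (-(2 * s k * ((multiEquiv.symm ⟨ω, f⟩ k) : ℝ))))
      = ∑' f : ω → ℕ, γ ω * ∏ k ∈ ω.attach,
          ENNReal.ofReal ((2 : ℝ) ^ (-(2 * s k * (((f k : ℝ)) + 1)))) :=
        tsum_congr fun f => hterm f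
    _ = γ ω * ∑' f : ω → ℕ, ∏ k ∈ ω.attach,
          ENNReal.ofReal ((2 : ℝ) ^ (-(2 * s k * (((f k : ℝ)) + 1)))) := ENNReal.tsum_mul_left
    _ = γ ω * ∏ k ∈ ω, ∑' m : ℕ,
          ENNReal.ofReal ((2 : ℝ) ^ (-(2 * s k * (((m : ℝ)) + 1)))) := by
        rw [key (fun k m => ENNReal.ofReal ((2 : ℝ) ^ (-(2 * s k * (((m : ℝ)) + 1))))) ω]
    _ = γ ω * ∏ k ∈ ω,
          ENNReal.ofReal ((2 : ℝ) ^ (-(2 * s k)) / (1 - (2 : ℝ) ^ (-(2 * s k)))) := by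
        congr 1
        exact Finset.prod_congr rfl fun k _ => geom (2 * s k) (by linarith [hs k])
end

section
/- Let q > 0 and let γ, α assign positive real values to finite subsets of ℕ, and let C', C'' > 0 be constants such that: (i) for every finite ω ⊆ ℕ, ∑_{ω̂ ⊇ ω} q^{|ω̂|} α(ω̂) ≤ C' q^{|ω|} α(ω), where the (unordered, [0,∞]-valued) sum runs over all finite supersets ω̂ of ω; and (ii) for every finite ω ⊆ ℕ, ∑_{ω' ⊆ ω} α(ω')/γ(ω') ≤ C'' α(ω)/γ(ω). Then for every family x of elements of [0,∞] indexed by the finite subsets of ℕ, ∑_{ω} γ(ω)⁻¹ ( ∑_{ω̂ ⊇ ω} q^{(|ω̂|−|ω|)/2} x(ω̂) )² ≤ C' C'' ∑_{ω̂} γ(ω̂)⁻¹ x(ω̂)², where the outer sums run over all finite subsets of ℕ. -/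
/-!
Cauchy–Schwarz with the weights `α` splits the inner sum as
`(∑_{ω̂ ⊇ ω} q^{(|ω̂|-|ω|)/2} x(ω̂))² ≤ (∑_{ω̂ ⊇ ω} q^{|ω̂|-|ω|} α(ω̂)) · ∑_{ω̂ ⊇ ω} x(ω̂)²/α(ω̂)`,
whose first factor is at most `C' α(ω)` by (i). Exchanging the two sums over `ω ⊆ ω̂`,
each `x(ω̂)²/α(ω̂)` then collects the factor `C' ∑_{ω ⊆ ω̂} α(ω)/γ(ω) ≤ C' C'' α(ω̂)/γ(ω̂)` by (ii).
-/

open scoped ENNReal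

namespace ENNReal

theorem tsum_sq_le_tsum_mul_tsum_of_sq_le_mul {ι : Type*} {r f g : ι → ℝ≥0∞}
    (h : ∀ i, r i ^ 2 ≤ f i * g i) : (∑' i, r i) ^ 2 ≤ (∑' i, f i) * ∑' i, g i := by
  have sq_sqrt : ∀ a : ℝ≥0∞, (a ^ (1 / 2 : ℝ)) ^ 2 = a := fun a => by
    rw [← rpow_two, ← rpow_mul]; norm_num
  have hr : ∀ i, r i ≤ f i ^ (1 / 2 : ℝ) * g i ^ (1 / 2 : ℝ) := fun i => by
    rw [← ENNReal.pow_le_pow_left_iff two_ne_zero, mul_pow, sq_sqrt, sq_sqrt]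
    exact h i
  suffices ∑' i, r i ≤ (∑' i, f i) ^ (1 / 2 : ℝ) * (∑' i, g i) ^ (1 / 2 : ℝ) by
    calc (∑' i, r i) ^ 2 ≤ ((∑' i, f i) ^ (1 / 2 : ℝ) * (∑' i, g i) ^ (1 / 2 : ℝ)) ^ 2 := by
          gcongr
      _ = _ := by rw [mul_pow, sq_sqrt, sq_sqrt]
  rw [ENNReal.tsum_eq_iSup_sum]
  refine iSup_le fun s => ?_
  calc ∑ i ∈ s, r i ≤ ∑ i ∈ s, f i ^ (1 / 2 : ℝ) * g i ^ (1 / 2 : ℝ) :=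
        Finset.sum_le_sum fun i _ => hr i
    _ ≤ (∑ i ∈ s, (f i ^ (1 / 2 : ℝ)) ^ (2 : ℝ)) ^ (1 / 2 : ℝ) *
          (∑ i ∈ s, (g i ^ (1 / 2 : ℝ)) ^ (2 : ℝ)) ^ (1 / 2 : ℝ) :=
        inner_le_Lp_mul_Lq s _ _ Real.HolderConjugate.two_two
    _ ≤ _ := by
        simp only [rpow_two, sq_sqrt]
        gcongr <;> exact ENNReal.sum_le_tsum s

theorem tsum_subtype_tsum_subtype_comm {α β : Type*} (p : α → β → Prop) (G : α → β → ℝ≥0∞) :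
    ∑' a, ∑' b : {b // p a b}, G a b = ∑' b, ∑' a : {a // p a b}, G a b := by
  have h₁ : ∀ a, ∑' b : {b // p a b}, G a b = ∑' b, {b | p a b}.indicator (G a) b :=
    fun a => tsum_subtype {b | p a b} (G a)
  have h₂ : ∀ b, ∑' a : {a // p a b}, G a b = ∑' a, {a | p a b}.indicator (G · b) a :=
    fun b => tsum_subtype {a | p a b} (G · b)
  simp only [h₁, h₂]
  -- both sides are `∑' a b, if p a b then G a b else 0`, up to definitional unfolding
  exact ENNReal.tsum_comm

theorem schur_test {ι : Type*} (p : ι → ι → Prop) (K : ι → ι → ℝ≥0∞) (w β x : ι → ℝ≥0∞)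
    {A B : ℝ≥0∞} (hβ₀ : ∀ i, β i ≠ 0) (hβ : ∀ i, β i ≠ ∞)
    (hK : ∀ i, ∑' j : {j // p i j}, K i j ^ 2 * β j ≤ A * β i)
    (hw : ∀ j, ∑' i : {i // p i j}, w i * β i ≤ B * (w j * β j)) :
    ∑' i, w i * (∑' j : {j // p i j}, K i j * x j) ^ 2 ≤ A * B * ∑' j, w j * x j ^ 2 := by
  have cauchy_schwarz : ∀ i, (∑' j : {j // p i j}, K i j * x j) ^ 2 ≤
      A * β i * ∑' j : {j // p i j}, x j ^ 2 / β j := fun i =>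
    calc _ ≤ (∑' j : {j // p i j}, K i j ^ 2 * β j) * ∑' j : {j // p i j}, x j ^ 2 / β j :=
          tsum_sq_le_tsum_mul_tsum_of_sq_le_mul fun j => le_of_eq <| by
            rw [mul_pow, mul_assoc, ENNReal.mul_div_cancel (hβ₀ j) (hβ j)]
      _ ≤ _ := by gcongr; exact hK i
  calc ∑' i, w i * (∑' j : {j // p i j}, K i j * x j) ^ 2
      ≤ ∑' i, w i * (A * β i * ∑' j : {j // p i j}, x j ^ 2 / β j) := by
        gcongr with i; exact cauchy_schwarz i
    _ = A * ∑' j, (∑' i : {i // p i j}, w i * β i) * (x j ^ 2 / β j) := by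
        simp only [← ENNReal.tsum_mul_left, ← ENNReal.tsum_mul_right]
        rw [tsum_subtype_tsum_subtype_comm p fun i j => w i * (A * β i * (x j ^ 2 / β j))]
        exact tsum_congr fun j => tsum_congr fun i => by ring
    _ ≤ A * ∑' j, B * (w j * β j) * (x j ^ 2 / β j) := by
        gcongr with j; exact hw j
    _ = A * B * ∑' j, w j * x j ^ 2 := by
        simp only [mul_assoc, ENNReal.mul_div_cancel (hβ₀ _) (hβ _), ← ENNReal.tsum_mul_left]

end ENNReal

theorem Finset.tsum_subtype_subset {ι M : Type*} [AddCommMonoid M] [TopologicalSpace M]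
    (s : Finset ι) (f : Finset ι → M) : ∑' t : {t // t ⊆ s}, f t = ∑ t ∈ s.powerset, f t := by
  rw [← Finset.tsum_subtype]
  exact (Equiv.subtypeEquivRight fun t => Finset.mem_powerset.symm).tsum_eq
    fun t : {t // t ∈ s.powerset} => f t

theorem ENNReal.ofReal_rpow_half_sq_mul {q : ℝ} (hq : 0 < q) (m n : ℕ) (a : ℝ) :
    ENNReal.ofReal (q ^ (((n : ℝ) - m) / 2)) ^ 2 * ENNReal.ofReal a =
      (ENNReal.ofReal (q ^ m))⁻¹ * ENNReal.ofReal (q ^ n * a) := by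
  have hsq : (q ^ (((n : ℝ) - m) / 2)) ^ 2 = (q ^ m)⁻¹ * q ^ n := by
    rw [← Real.rpow_two, ← Real.rpow_mul hq.le, div_mul_cancel₀ _ two_ne_zero,
      Real.rpow_sub hq, Real.rpow_natCast, Real.rpow_natCast, div_eq_inv_mul]
  rw [← ENNReal.ofReal_pow (by positivity), ← ENNReal.ofReal_inv_of_pos (by positivity),
    ← ENNReal.ofReal_mul (by positivity), ← ENNReal.ofReal_mul (by positivity), hsq, mul_assoc]

section FinsetWeights

variable {ι : Type*} {α : Finset ι → ℝ} {C : ℝ}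

theorem tsum_superset_ofReal_rpow_sq_mul_le {q : ℝ} (hq : 0 < q) (hα : ∀ ω, 0 ≤ α ω)
    (h : ∀ ω : Finset ι, ∑' σ : {σ // ω ⊆ σ}, ENNReal.ofReal (q ^ (σ : Finset ι).card * α σ) ≤
      ENNReal.ofReal (C * q ^ ω.card * α ω)) (ω : Finset ι) :
    ∑' σ : {σ // ω ⊆ σ},
        ENNReal.ofReal (q ^ ((((σ : Finset ι).card : ℝ) - ω.card) / 2)) ^ 2 *
          ENNReal.ofReal (α σ) ≤
      ENNReal.ofReal C * ENNReal.ofReal (α ω) := by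
  have hqω : ENNReal.ofReal (q ^ ω.card) ≠ 0 := (ENNReal.ofReal_pos.2 (by positivity)).ne'
  simp only [ENNReal.ofReal_rpow_half_sq_mul hq, ENNReal.tsum_mul_left]
  calc (ENNReal.ofReal (q ^ ω.card))⁻¹ *
        ∑' σ : {σ // ω ⊆ σ}, ENNReal.ofReal (q ^ (σ : Finset ι).card * α σ)
      ≤ (ENNReal.ofReal (q ^ ω.card))⁻¹ * ENNReal.ofReal (q ^ ω.card * (C * α ω)) := by
        rw [mul_left_comm, ← mul_assoc]
        gcongr
        exact h ω
    _ = ENNReal.ofReal C * ENNReal.ofReal (α ω) := by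
        rw [ENNReal.ofReal_mul (by positivity), ← mul_assoc,
          ENNReal.inv_mul_cancel hqω ENNReal.ofReal_ne_top, one_mul, ENNReal.ofReal_mul' (hα ω)]

theorem tsum_subset_ofReal_inv_mul_le {γ : Finset ι → ℝ} (hγ : ∀ ω, 0 ≤ γ ω)
    (hα : ∀ ω, 0 ≤ α ω) (h : ∀ ω, ∑ ω' ∈ ω.powerset, α ω' / γ ω' ≤ C * α ω / γ ω)
    (σ : Finset ι) :
    ∑' ω : {ω // ω ⊆ σ}, ENNReal.ofReal (γ ω)⁻¹ * ENNReal.ofReal (α ω) ≤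
      ENNReal.ofReal C * (ENNReal.ofReal (γ σ)⁻¹ * ENNReal.ofReal (α σ)) := by
  have hdiv : ∀ ω, ENNReal.ofReal (γ ω)⁻¹ * ENNReal.ofReal (α ω) = ENNReal.ofReal (α ω / γ ω) :=
    fun ω => by rw [← ENNReal.ofReal_mul (inv_nonneg.2 (hγ ω)), div_eq_inv_mul]
  have hnonneg : ∀ ω, 0 ≤ α ω / γ ω := fun ω => div_nonneg (hα ω) (hγ ω)
  rw [Finset.tsum_subtype_subset σ fun ω => ENNReal.ofReal (γ ω)⁻¹ * ENNReal.ofReal (α ω)]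
  simp only [hdiv, ← ENNReal.ofReal_sum_of_nonneg fun ω _ => hnonneg ω]
  rw [← ENNReal.ofReal_mul' (hnonneg σ), ← mul_div_assoc]
  exact ENNReal.ofReal_le_ofReal (h σ)

end FinsetWeights

theorem stmt13_general (q : ℝ) (hq : 0 < q) (γ α : Finset ℕ → ℝ)
    (hγ : ∀ ω, 0 < γ ω) (hα : ∀ ω, 0 < α ω)
    (C' C'' : ℝ) (hC' : 0 < C')
    (h1 : ∀ ω : Finset ℕ,
      ∑' σ : {σ : Finset ℕ // ω ⊆ σ},
          ENNReal.ofReal (q ^ (σ : Finset ℕ).card * α (σ : Finset ℕ)) ≤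
        ENNReal.ofReal (C' * q ^ ω.card * α ω))
    (h2 : ∀ ω : Finset ℕ,
      ∑ ω' ∈ ω.powerset, α ω' / γ ω' ≤ C'' * α ω / γ ω) :
    ∀ x : Finset ℕ → ℝ≥0∞,
      ∑' ω : Finset ℕ, ENNReal.ofReal ((γ ω)⁻¹) *
          (∑' σ : {σ : Finset ℕ // ω ⊆ σ},
            ENNReal.ofReal (q ^ ((((σ : Finset ℕ).card : ℝ) - (ω.card : ℝ)) / 2)) *
              x (σ : Finset ℕ)) ^ 2 ≤
        ENNReal.ofReal (C' * C'') *
          ∑' σ : Finset ℕ, ENNReal.ofReal ((γ σ)⁻¹) * x σ ^ 2 := by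
  intro x
  rw [ENNReal.ofReal_mul hC'.le]
  exact ENNReal.schur_test (· ⊆ ·)
    (fun ω σ => ENNReal.ofReal (q ^ (((σ.card : ℝ) - ω.card) / 2)))
    (fun ω => ENNReal.ofReal (γ ω)⁻¹) (fun ω => ENNReal.ofReal (α ω)) x
    (fun ω => (ENNReal.ofReal_pos.2 (hα ω)).ne') (fun _ => ENNReal.ofReal_ne_top)
    (tsum_superset_ofReal_rpow_sq_mul_le hq (fun ω => (hα ω).le) h1)
    (tsum_subset_ofReal_inv_mul_le (fun ω => (hγ ω).le) (fun ω => (hα ω).le) h2)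

/-- core estimate in the proof of Proposition 5.
Let `q > 0`, let `γ, α` assign positive reals to finite subsets of `ℕ`, and let `C', C'' > 0`
satisfy (i) `∑_{ω̂ ⊇ ω} q^{|ω̂|} α(ω̂) ≤ C' q^{|ω|} α(ω)` and
(ii) `∑_{ω' ⊆ ω} α(ω')/γ(ω') ≤ C'' α(ω)/γ(ω)` for all finite `ω ⊆ ℕ`.  Then for every
`[0,∞]`-valued family `x` indexed by finite subsets of `ℕ`,
`∑_ω γ(ω)⁻¹ (∑_{ω̂ ⊇ ω} q^{(|ω̂|-|ω|)/2} x(ω̂))² ≤ C' C'' ∑_ω̂ γ(ω̂)⁻¹ x(ω̂)²`. -/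
theorem stmt13 (q : ℝ) (hq : 0 < q) (γ α : Finset ℕ → ℝ)
    (hγ : ∀ ω, 0 < γ ω) (hα : ∀ ω, 0 < α ω)
    (C' C'' : ℝ) (hC' : 0 < C') (hC'' : 0 < C'')
    (h1 : ∀ ω : Finset ℕ,
      ∑' σ : {σ : Finset ℕ // ω ⊆ σ},
          ENNReal.ofReal (q ^ (σ : Finset ℕ).card * α (σ : Finset ℕ)) ≤
        ENNReal.ofReal (C' * q ^ ω.card * α ω))
    (h2 : ∀ ω : Finset ℕ,
      ∑ ω' ∈ ω.powerset, α ω' / γ ω' ≤ C'' * α ω / γ ω) :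
    ∀ x : Finset ℕ → ℝ≥0∞,
      ∑' ω : Finset ℕ, ENNReal.ofReal ((γ ω)⁻¹) *
          (∑' σ : {σ : Finset ℕ // ω ⊆ σ},
            ENNReal.ofReal (q ^ ((((σ : Finset ℕ).card : ℝ) - (ω.card : ℝ)) / 2)) *
              x (σ : Finset ℕ)) ^ 2 ≤
        ENNReal.ofReal (C' * C'') *
          ∑' σ : Finset ℕ, ENNReal.ofReal ((γ σ)⁻¹) * x σ ^ 2 :=
  stmt13_general q hq γ α hγ hα C' C'' hC' h1 h2
end

section
/- Let g, g' : ℝ → ℝ be such that g' is integrable on (0,1), g(x) = g(0) + ∫₀^x g'(t) dt for all x ∈ [0,1], and ∫₀¹ g'(t)² dt < ∞. Then ∫₀¹ ( g(x) − ∫₀¹ g(t) dt )² dx ≤ (1/6) ∫₀¹ g'(t)² dt. -/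
/-!
For the kernel `κ(x, t) = 𝟙[t ≤ x] - (1 - t)` and the constant `c = g 1 - ∫₀¹ g'(t) t dt`,
the fundamental theorem of calculus gives `g x - c = ∫₀¹ g'(t) κ(x, t) dt`. Cauchy–Schwarz then
bounds `(g x - c)²` by `(∫₀¹ g'²) · ∫₀¹ κ(x, ·)² = (∫₀¹ g'²) (1/3 - x + x²)`, whose integral over
`x` is `(1/6) ∫₀¹ g'²`. Finally, the mean of `g` minimises `c ↦ ∫₀¹ (g - c)²` (variance is at
most the second moment about any point), so `c` may be replaced by the mean.
-/

open MeasureTheory Set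

lemma sq_integral_mul_le_integral_sq_mul_integral_sq {α : Type*} [MeasurableSpace α]
    {μ : Measure α} {f h : α → ℝ} (hf : Integrable (fun t => f t ^ 2) μ)
    (hh : Integrable (fun t => h t ^ 2) μ) :
    (∫ t, f t * h t ∂μ) ^ 2 ≤ (∫ t, f t ^ 2 ∂μ) * ∫ t, h t ^ 2 ∂μ := by
  by_cases hfh : Integrable (fun t => f t * h t) μ
  swap
  · rw [integral_undef hfh, sq, zero_mul]
    exact mul_nonneg (integral_nonneg fun t => sq_nonneg _) (integral_nonneg fun t => sq_nonneg _)
  have quadratic_nonneg : ∀ s : ℝ, 0 ≤ (∫ t, h t ^ 2 ∂μ) * (s * s)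
      + (-2 * ∫ t, f t * h t ∂μ) * s + ∫ t, f t ^ 2 ∂μ := by
    intro s
    have hexpand : (fun t => (f t - s * h t) ^ 2)
        = fun t => (s * s) * h t ^ 2 + (-2 * s) * (f t * h t) + f t ^ 2 := by
      funext t; ring
    have hnonneg : 0 ≤ ∫ t, (f t - s * h t) ^ 2 ∂μ := integral_nonneg fun t => sq_nonneg _
    rw [hexpand, integral_add (f := fun t => s * s * h t ^ 2 + -2 * s * (f t * h t))
      ((hh.const_mul _).add (hfh.const_mul _)) hf,
      integral_add (hh.const_mul _) (hfh.const_mul _), integral_const_mul,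
      integral_const_mul] at hnonneg
    linarith
  have hdiscr := discrim_le_zero quadratic_nonneg
  rw [discrim] at hdiscr
  nlinarith

lemma integral_sq_sub_integral_le_integral_sq_sub {Ω : Type*} [MeasurableSpace Ω]
    {μ : Measure Ω} [IsProbabilityMeasure μ] {f : Ω → ℝ} (hf : AEStronglyMeasurable f μ)
    (c : ℝ) : ∫ ω, (f ω - ∫ ω', f ω' ∂μ) ^ 2 ∂μ ≤ ∫ ω, (f ω - c) ^ 2 ∂μ := by
  rw [← ProbabilityTheory.variance_eq_integral hf.aemeasurable,
    ← ProbabilityTheory.variance_sub_const hf c]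
  exact ProbabilityTheory.variance_le_expectation_sq (hf.sub aestronglyMeasurable_const)

lemma intervalIntegral_sq_sub_mean_le {f : ℝ → ℝ} (hf : ContinuousOn f (Icc 0 1)) (c : ℝ) :
    ∫ x in (0 : ℝ)..1, (f x - ∫ t in (0 : ℝ)..1, f t) ^ 2 ≤ ∫ x in (0 : ℝ)..1, (f x - c) ^ 2 := by
  have : IsProbabilityMeasure (volume.restrict (Ioc (0 : ℝ) 1)) := ⟨by simp⟩
  simp only [intervalIntegral.integral_of_le zero_le_one]
  exact integral_sq_sub_integral_le_integral_sq_sub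
    ((hf.mono Ioc_subset_Icc_self).aestronglyMeasurable measurableSet_Ioc) c

lemma intervalIntegrable_ite_le {f₁ f₂ : ℝ → ℝ} {a x b : ℝ} (hax : a ≤ x) (hxb : x ≤ b)
    (h₁ : IntervalIntegrable f₁ volume a x) (h₂ : IntervalIntegrable f₂ volume x b) :
    IntervalIntegrable (fun t => if t ≤ x then f₁ t else f₂ t) volume a b := by
  refine IntervalIntegrable.trans (b := x) (h₁.congr fun t ht => ?_) (h₂.congr fun t ht => ?_)
  · rw [uIoc_of_le hax] at ht
    simp [ht.2]
  · rw [uIoc_of_le hxb] at ht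
    simp [not_le.2 ht.1]

lemma integral_ite_le {f₁ f₂ : ℝ → ℝ} {a x b : ℝ} (hax : a ≤ x) (hxb : x ≤ b)
    (h₁ : IntervalIntegrable f₁ volume a x) (h₂ : IntervalIntegrable f₂ volume x b) :
    ∫ t in a..b, (if t ≤ x then f₁ t else f₂ t) = (∫ t in a..x, f₁ t) + ∫ t in x..b, f₂ t := by
  have hite := intervalIntegrable_ite_le hax hxb h₁ h₂
  have hx : x ∈ uIcc a b := uIcc_of_le (hax.trans hxb) ▸ ⟨hax, hxb⟩
  rw [← intervalIntegral.integral_add_adjacent_intervals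
    (hite.mono_set (uIcc_subset_uIcc left_mem_uIcc hx))
    (hite.mono_set (uIcc_subset_uIcc hx right_mem_uIcc))]
  congr 1 <;> refine intervalIntegral.integral_congr_ae (ae_of_all _ fun t ht => ?_)
  · rw [uIoc_of_le hax] at ht
    simp [ht.2]
  · rw [uIoc_of_le hxb] at ht
    simp [not_le.2 ht.1]

lemma continuousOn_of_eq_add_integral {g g' : ℝ → ℝ} {a b : ℝ} (hab : a ≤ b)
    (hg' : IntervalIntegrable g' volume a b)
    (hftc : ∀ x ∈ Icc a b, g x = g a + ∫ t in a..x, g' t) : ContinuousOn g (Icc a b) := by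
  rw [← uIcc_of_le hab] at hftc ⊢
  exact (continuousOn_const.add
    (intervalIntegral.continuousOn_primitive_interval' hg' left_mem_uIcc)).congr hftc

-- `κ(x, t) = 𝟙[t ≤ x] - (1 - t)`, written piecewise.
noncomputable def poincareKernel (x t : ℝ) : ℝ := if t ≤ x then t else t - 1

lemma integral_mul_poincareKernel {g g' : ℝ → ℝ} (hg' : IntervalIntegrable g' volume 0 1)
    (hftc : ∀ x ∈ Icc (0 : ℝ) 1, g x = g 0 + ∫ t in (0 : ℝ)..x, g' t) {x : ℝ}
    (hx : x ∈ Icc (0 : ℝ) 1) :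
    ∫ t in (0 : ℝ)..1, g' t * poincareKernel x t = g x - (g 1 - ∫ t in (0 : ℝ)..1, g' t * t) := by
  have hx' : x ∈ uIcc (0 : ℝ) 1 := uIcc_of_le (zero_le_one' ℝ) ▸ hx
  have h₁ : IntervalIntegrable g' volume 0 x := hg'.mono_set (uIcc_subset_uIcc left_mem_uIcc hx')
  have h₂ : IntervalIntegrable g' volume x 1 := hg'.mono_set (uIcc_subset_uIcc hx' right_mem_uIcc)
  have h₁id := h₁.mul_continuousOn (continuousOn_id' _)
  have h₂id := h₂.mul_continuousOn (continuousOn_id' _)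
  simp only [poincareKernel, mul_ite, mul_sub, mul_one]
  rw [integral_ite_le hx.1 hx.2 h₁id (h₂id.sub h₂), intervalIntegral.integral_sub h₂id h₂,
    ← intervalIntegral.integral_interval_sub_left hg' h₁,
    ← intervalIntegral.integral_add_adjacent_intervals h₁id h₂id, hftc x hx,
    hftc 1 ⟨zero_le_one, le_rfl⟩]
  ring

lemma intervalIntegrable_poincareKernel_sq {x : ℝ} (hx : x ∈ Icc (0 : ℝ) 1) :
    IntervalIntegrable (fun t => poincareKernel x t ^ 2) volume 0 1 := by
  simp only [poincareKernel, apply_ite (· ^ 2)]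
  exact intervalIntegrable_ite_le hx.1 hx.2 ((continuous_pow 2).intervalIntegrable _ _)
    ((by fun_prop : Continuous fun t : ℝ => (t - 1) ^ 2).intervalIntegrable _ _)

lemma integral_poincareKernel_sq {x : ℝ} (hx : x ∈ Icc (0 : ℝ) 1) :
    ∫ t in (0 : ℝ)..1, poincareKernel x t ^ 2 = 1 / 3 - x + x ^ 2 := by
  simp only [poincareKernel, apply_ite (· ^ 2)]
  rw [integral_ite_le hx.1 hx.2 ((continuous_pow 2).intervalIntegrable _ _)
    ((by fun_prop : Continuous fun t : ℝ => (t - 1) ^ 2).intervalIntegrable _ _),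
    intervalIntegral.integral_comp_sub_right (fun t => t ^ 2)]
  simp only [integral_pow]
  ring

lemma sq_sub_le_integral_sq_mul {g g' : ℝ → ℝ} (hg' : IntervalIntegrable g' volume 0 1)
    (hsq : IntervalIntegrable (fun t => g' t ^ 2) volume 0 1)
    (hftc : ∀ x ∈ Icc (0 : ℝ) 1, g x = g 0 + ∫ t in (0 : ℝ)..x, g' t) {x : ℝ}
    (hx : x ∈ Icc (0 : ℝ) 1) :
    (g x - (g 1 - ∫ t in (0 : ℝ)..1, g' t * t)) ^ 2 ≤
      (∫ t in (0 : ℝ)..1, g' t ^ 2) * (1 / 3 - x + x ^ 2) := by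
  rw [← integral_mul_poincareKernel hg' hftc hx, ← integral_poincareKernel_sq hx]
  simp only [intervalIntegral.integral_of_le zero_le_one]
  exact sq_integral_mul_le_integral_sq_mul_integral_sq hsq.1
    (intervalIntegrable_poincareKernel_sq hx).1

/-- univariate Poincaré-type inequality with constant 1/6.
If `g` is absolutely continuous on `[0,1]` with derivative `g'` integrable on `(0,1)` and
`∫₀¹ g'(t)² dt < ∞`, then `∫₀¹ (g(x) - ∫₀¹ g(t) dt)² dx ≤ (1/6) ∫₀¹ g'(t)² dt`. -/
theorem stmt15 (g g' : ℝ → ℝ)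
    (hint : IntegrableOn g' (Set.Ioo 0 1))
    (hftc : ∀ x ∈ Set.Icc (0 : ℝ) 1, g x = g 0 + ∫ t in (0 : ℝ)..x, g' t)
    (hsq : IntegrableOn (fun t => g' t ^ 2) (Set.Ioo 0 1)) :
    ∫ x in (0 : ℝ)..1, (g x - ∫ t in (0 : ℝ)..1, g t) ^ 2 ≤
      (1 / 6) * ∫ t in (0 : ℝ)..1, g' t ^ 2 := by
  have hg' := (intervalIntegrable_iff_integrableOn_Ioo_of_le zero_le_one).2 hint
  have hsq' := (intervalIntegrable_iff_integrableOn_Ioo_of_le zero_le_one).2 hsq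
  have hg : ContinuousOn g (Icc 0 1) := continuousOn_of_eq_add_integral zero_le_one hg' hftc
  set c := g 1 - ∫ t in (0 : ℝ)..1, g' t * t
  set C := ∫ t in (0 : ℝ)..1, g' t ^ 2
  calc ∫ x in (0 : ℝ)..1, (g x - ∫ t in (0 : ℝ)..1, g t) ^ 2
      ≤ ∫ x in (0 : ℝ)..1, (g x - c) ^ 2 := intervalIntegral_sq_sub_mean_le hg c
    _ ≤ ∫ x in (0 : ℝ)..1, C * (1 / 3 - x + x ^ 2) := by
      refine intervalIntegral.integral_mono_on zero_le_one ?_ ?_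
        fun x hx => sq_sub_le_integral_sq_mul hg' hsq' hftc hx
      · exact ((hg.sub continuousOn_const).pow 2).intervalIntegrable_of_Icc zero_le_one
      · exact (by fun_prop : Continuous fun x : ℝ => C * (1 / 3 - x + x ^ 2)).intervalIntegrable _ _
    _ = 1 / 6 * C := by
      have hmoment : ∫ x in (0 : ℝ)..1, (1 / 3 - x + x ^ 2) = 1 / 6 := by
        rw [intervalIntegral.integral_add, intervalIntegral.integral_sub] <;>
          norm_num [integral_pow]
        exact (continuous_sub_left _).intervalIntegrable _ _
      rw [intervalIntegral.integral_const_mul, hmoment, mul_comm]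
end
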